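/- arXiv:math/0408282 — 2 statements merged into one kernel-verified Lean document; each statement's English description precedes it below -/
import Mathlib

section
/- If k₁:Z₁→X₁ and k₂:Z₂→X₂ are skew fibrations of graphs, then k₁∨k₂ : Z₁∨Z₂ → X₁∨X₂, defined by (k₁∨k₂)(z)=kᵢ(z) for z a vertex of Zᵢ, is a skew fibration. -/
/- Combinatorial proofs (Hughes, "Proofs Without Syntax"): common definitions. -/

namespace CombinatorialProofs

/-- An atom: a literal (a variable `p` or its negation `p̄`) or a constant (`1` or `0`). -/
inductive Atom (ν : Type) : Type where
  | pos : ν → Atom ν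
  | neg : ν → Atom ν
  | tru : Atom ν
  | fls : Atom ν

/-- The dual of an atom. -/
def Atom.dual {ν : Type} : Atom ν → Atom ν
  | .pos p => .neg p
  | .neg p => .pos p
  | .tru   => .fls
  | .fls   => .tru

/-- Two atoms are dual literals. -/
def DualLiterals {ν : Type} (a b : Atom ν) : Prop :=
  ∃ p : ν, (a = .pos p ∧ b = .neg p) ∨ (a = .neg p ∧ b = .pos p)

/-- An `𝒜`-labelled graph: a simple graph together with an atom labelling each vertex. -/
structure LabGraph (ν : Type) : Type 1 where
  V : Type
  G : SimpleGraph V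
  label : V → Atom ν

/-- The disjoint union `G₁ ∨ G₂` of two graphs (on the sum of the vertex types). -/
def sumUnion {V₁ V₂ : Type} (G₁ : SimpleGraph V₁) (G₂ : SimpleGraph V₂) :
    SimpleGraph (V₁ ⊕ V₂) where
  Adj v w :=
    match v, w with
    | .inl a, .inl b => G₁.Adj a b
    | .inr a, .inr b => G₂.Adj a b
    | _, _ => False
  symm := ⟨by rintro (a | a) (b | b) h <;> first | exact h.symm | exact h.elim⟩
  loopless := ⟨by rintro (a | a) h <;> exact SimpleGraph.irrefl _ h⟩

/-- The join `G₁ ∧ G₂` of two graphs: disjoint union plus all edges in between. -/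
def sumJoin {V₁ V₂ : Type} (G₁ : SimpleGraph V₁) (G₂ : SimpleGraph V₂) :
    SimpleGraph (V₁ ⊕ V₂) where
  Adj v w :=
    match v, w with
    | .inl a, .inl b => G₁.Adj a b
    | .inr a, .inr b => G₂.Adj a b
    | _, _ => True
  symm := ⟨by rintro (a | a) (b | b) h <;> first | exact h.symm | trivial⟩
  loopless := ⟨by rintro (a | a) h <;> exact SimpleGraph.irrefl _ h⟩

/-- `¬G`: complement the edge set and dualise every label. -/
def LabGraph.neg {ν : Type} (A : LabGraph ν) : LabGraph ν :=
  ⟨A.V, A.Gᶜ, fun v => (A.label v).dual⟩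

/-- Union of labelled graphs. -/
def LabGraph.union {ν : Type} (A B : LabGraph ν) : LabGraph ν :=
  ⟨A.V ⊕ B.V, sumUnion A.G B.G, Sum.elim A.label B.label⟩

/-- Join of labelled graphs. -/
def LabGraph.join {ν : Type} (A B : LabGraph ν) : LabGraph ν :=
  ⟨A.V ⊕ B.V, sumJoin A.G B.G, Sum.elim A.label B.label⟩

/-- A single vertex labelled by the atom `a`. -/
def LabGraph.ofAtom {ν : Type} (a : Atom ν) : LabGraph ν :=
  ⟨PUnit, ⊥, fun _ => a⟩

/-- Propositions, generated freely from variables by `∧`, `∨`, `⇒`, `¬`, `1`, `0`. -/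
inductive Form (ν : Type) : Type where
  | var : ν → Form ν
  | tru : Form ν
  | fls : Form ν
  | not : Form ν → Form ν
  | and : Form ν → Form ν → Form ν
  | or  : Form ν → Form ν → Form ν
  | imp : Form ν → Form ν → Form ν

/-- The boolean value of a proposition under a valuation, with
`f̂(φ ⇒ ρ) = f̂((¬φ) ∨ ρ)`. -/
def Form.eval {ν : Type} (f : ν → Bool) : Form ν → Bool
  | .var p   => f p
  | .tru     => true
  | .fls     => false
  | .not φ   => !(φ.eval f)
  | .and φ ρ => φ.eval f && ρ.eval f
  | .or φ ρ  => φ.eval f || ρ.eval f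
  | .imp φ ρ => !(φ.eval f) || ρ.eval f

/-- A proposition is true if it evaluates to `1` under every valuation. -/
def Form.Valid {ν : Type} (φ : Form ν) : Prop :=
  ∀ f : ν → Bool, φ.eval f = true

/-- The labelled graph `G(φ)` of a proposition `φ`, with `∨` as union, `∧` as join,
`¬` as the labelled-graph negation, and `G ⇒ G' = (¬G) ∨ G'`. -/
def Form.graph {ν : Type} : Form ν → LabGraph ν
  | .var p   => .ofAtom (.pos p)
  | .tru     => .ofAtom .tru
  | .fls     => .ofAtom .fls
  | .not φ   => φ.graph.neg
  | .and φ ρ => φ.graph.join ρ.graph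
  | .or φ ρ  => φ.graph.union ρ.graph
  | .imp φ ρ => φ.graph.neg.union ρ.graph

/-- A set of vertices is stable if no two of its elements are joined by an edge. -/
def IsStable {V : Type} (G : SimpleGraph V) (W : Set V) : Prop :=
  ∀ v ∈ W, ∀ w ∈ W, ¬ G.Adj v w

/-- A clause of the subgraph of `G` induced by `S`: a subset of `S` that is stable and
maximal among stable subsets of `S`. -/
def IsClauseOn {V : Type} (G : SimpleGraph V) (S W : Set V) : Prop :=
  W ⊆ S ∧ IsStable G W ∧ ∀ W' : Set V, W' ⊆ S → IsStable G W' → W ⊆ W' → W' = W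

/-- A clause: a maximal stable set. -/
def IsClause {V : Type} (G : SimpleGraph V) (W : Set V) : Prop :=
  IsClauseOn G Set.univ W

/-- A clause (set of vertices) of an `𝒜`-labelled graph is true if it contains a
`1`-labelled vertex or two vertices labelled by dual literals. -/
def ClauseTrue {ν V : Type} (label : V → Atom ν) (W : Set V) : Prop :=
  (∃ v ∈ W, label v = Atom.tru) ∨
  (∃ v ∈ W, ∃ w ∈ W, DualLiterals (label v) (label w))

/-- An `𝒜`-labelled graph is true if all of its clauses are true. -/
def LabGraph.IsTrue {ν : Type} (A : LabGraph ν) : Prop :=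
  ∀ W : Set A.V, IsClause A.G W → ClauseTrue A.label W

/-- A cograph: a non-empty graph with no induced path on four vertices. -/
def IsCograph {V : Type} (G : SimpleGraph V) : Prop :=
  Nonempty V ∧
  ∀ v w x y : V, v ≠ w → v ≠ x → v ≠ y → w ≠ x → w ≠ y → x ≠ y →
    ¬ (G.Adj v w ∧ G.Adj w x ∧ G.Adj x y ∧ ¬ G.Adj v x ∧ ¬ G.Adj w y ∧ ¬ G.Adj v y)

/-- A graph homomorphism: a function on vertices preserving adjacency. -/
def IsGraphHom {V V' : Type} (G : SimpleGraph V) (G' : SimpleGraph V') (h : V → V') : Prop :=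
  ∀ v w : V, G.Adj v w → G'.Adj (h v) (h w)

/-- A skew fibration: a graph homomorphism such that for every vertex `v` of `G` and every
edge `h(v)w` of `G'` there is an edge `v w̃` of `G` with `h(w̃)w` not an edge of `G'`. -/
def IsSkewFib {V V' : Type} (G : SimpleGraph V) (G' : SimpleGraph V') (h : V → V') : Prop :=
  IsGraphHom G G' h ∧
  ∀ (v : V) (w : V'), G'.Adj (h v) w → ∃ u : V, G.Adj v u ∧ ¬ G'.Adj (h u) w

/-- A colouring of a graph: an equivalence relation relating only non-adjacent vertices. -/
def IsColouring {V : Type} (G : SimpleGraph V) (sim : V → V → Prop) : Prop :=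
  Equivalence sim ∧ ∀ v w : V, sim v w → ¬ G.Adj v w

/-- The colour class of a vertex. -/
def ColourClass {V : Type} (sim : V → V → Prop) (v : V) : Set V := {w | sim v w}

/-- A set `W` of vertices induces a matching if it is non-empty and every `w ∈ W` has a
unique `w' ∈ W` with `w w'` an edge. -/
def InducesMatching {V : Type} (G : SimpleGraph V) (W : Set V) : Prop :=
  W.Nonempty ∧ ∀ w ∈ W, ∃! w' : V, w' ∈ W ∧ G.Adj w w'

/-- A nice colouring: every colour class has at most two vertices, and no union of
two-vertex colour classes induces a matching. -/
def IsNiceColouring {V : Type} (G : SimpleGraph V) (sim : V → V → Prop) : Prop :=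
  IsColouring G sim ∧
  (∀ v : V, ∀ a ∈ ColourClass sim v, ∀ b ∈ ColourClass sim v, ∀ c ∈ ColourClass sim v,
      a = b ∨ a = c ∨ b = c) ∧
  (∀ W : Set V,
    (∀ v ∈ W, ColourClass sim v ⊆ W ∧ ∃ w : V, w ≠ v ∧ sim v w) →
    ¬ InducesMatching G W)

/-- A colour class is axiomatic (w.r.t. a map `h` into an `𝒜`-labelled graph) if it is a
single vertex `v` with `h(v)` labelled `1`, or a pair `{v,w}` with `h(v)`, `h(w)` labelled
by dual literals. -/
def AxiomaticClass {ν V V' : Type} (label : V' → Atom ν) (h : V → V') (K : Set V) : Prop :=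
  (∃ v : V, K = {v} ∧ label (h v) = Atom.tru) ∨
  (∃ v w : V, v ≠ w ∧ K = {v, w} ∧ DualLiterals (label (h v)) (label (h w)))

/-- A combinatorial proof of an `𝒜`-labelled graph `P`: a skew fibration `h : C → P` from a
nicely coloured cograph `C` all of whose colour classes are axiomatic. -/
def IsCombProof {ν V : Type} (C : SimpleGraph V) (sim : V → V → Prop)
    (P : LabGraph ν) (h : V → P.V) : Prop :=
  IsCograph C ∧ IsNiceColouring C sim ∧ IsSkewFib C P.G h ∧
  ∀ v : V, AxiomaticClass P.label h (ColourClass sim v)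

/-- `A` is a portion of the subgraph of `G` induced by `S`: `A ⊆ S` and no edge of `G`
joins `A` to `S \ A` (so that the induced subgraph on `S` is the union of those on `A`
and `S \ A`). -/
def IsPortionOn {V : Type} (G : SimpleGraph V) (S A : Set V) : Prop :=
  A ⊆ S ∧ ∀ a ∈ A, ∀ b ∈ S, b ∉ A → ¬ G.Adj a b

/-- The fusion of `G₁` and `G₂` along portions `A` of `G₁` and `B` of `G₂`: the union
`G₁ ∨ G₂` with all edges between `A` and `B` added. -/
def fusion {V₁ V₂ : Type} (G₁ : SimpleGraph V₁) (G₂ : SimpleGraph V₂)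
    (A : Set V₁) (B : Set V₂) : SimpleGraph (V₁ ⊕ V₂) where
  Adj v w :=
    match v, w with
    | .inl a, .inl b => G₁.Adj a b
    | .inr a, .inr b => G₂.Adj a b
    | .inl a, .inr b => a ∈ A ∧ b ∈ B
    | .inr b, .inl a => a ∈ A ∧ b ∈ B
  symm := ⟨by rintro (a | a) (b | b) h <;> first | exact h.symm | exact h⟩
  loopless := ⟨by rintro (a | a) h <;> exact SimpleGraph.irrefl _ h⟩

/-- The inherited colouring on a disjoint union (or fusion): vertices in different parts
are never related. -/
def simSum {V₁ V₂ : Type} (s₁ : V₁ → V₁ → Prop) (s₂ : V₂ → V₂ → Prop) :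
    V₁ ⊕ V₂ → V₁ ⊕ V₂ → Prop
  | .inl a, .inl b => s₁ a b
  | .inr a, .inr b => s₂ a b
  | _, _ => False

/-- The set `S` cannot be split into two non-empty parts with no edges in between;
i.e. the subgraph induced by `S` is connected (not a union of two non-empty graphs). -/
def NoSplit {V : Type} (G : SimpleGraph V) (S : Set V) : Prop :=
  ∀ A B : Set V, A ∪ B = S → Disjoint A B →
    (∀ a ∈ A, ∀ b ∈ B, ¬ G.Adj a b) → A = ∅ ∨ B = ∅

/-- A component: a maximal non-empty connected (induced) subgraph. -/
def IsComponent {V : Type} (G : SimpleGraph V) (S : Set V) : Prop :=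
  S.Nonempty ∧ NoSplit G S ∧ ∀ T : Set V, S ⊆ T → T.Nonempty → NoSplit G T → T = S

/-- A graph homomorphism is shallow if the preimage of every component has at most one
component (i.e. the preimage induces a connected, possibly empty, subgraph). -/
def IsShallow {V V' : Type} (G : SimpleGraph V) (H : SimpleGraph V') (h : V → V') : Prop :=
  ∀ K : Set V', IsComponent H K → NoSplit G (h ⁻¹' K)

/-- The disjoint union of `n` label-preserving isomorphic copies of a labelled graph. -/
def LabGraph.copies {ν : Type} (P : LabGraph ν) (n : ℕ) : LabGraph ν where
  V := P.V × Fin n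
  G := { Adj := fun a b => a.2 = b.2 ∧ P.G.Adj a.1 b.1
         symm := ⟨fun _ _ h => ⟨h.1.symm, h.2.symm⟩⟩
         loopless := ⟨fun a h => SimpleGraph.irrefl _ h.2⟩ }
  label := fun a => P.label a.1

end CombinatorialProofs
namespace CombinatorialProofs

/-- If `k₁ : Z₁ → X₁` and `k₂ : Z₂ → X₂` are skew fibrations, then
`k₁ ∨ k₂ : Z₁ ∨ Z₂ → X₁ ∨ X₂` is a skew fibration. -/
theorem skewFib_union_map {U₁ U₂ V₁ V₂ : Type}
    [Fintype U₁] [Fintype U₂] [Fintype V₁] [Fintype V₂]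
    (Z₁ : SimpleGraph U₁) (Z₂ : SimpleGraph U₂)
    (X₁ : SimpleGraph V₁) (X₂ : SimpleGraph V₂)
    (k₁ : U₁ → V₁) (k₂ : U₂ → V₂)
    (h₁ : IsSkewFib Z₁ X₁ k₁) (h₂ : IsSkewFib Z₂ X₂ k₂) :
    IsSkewFib (sumUnion Z₁ Z₂) (sumUnion X₁ X₂) (Sum.map k₁ k₂) := by
  constructor
  · rintro (a|a) (b|b) h <;> simp [sumUnion] at h ⊢
    · exact h₁.1 a b h
    · exact h₂.1 a b h
  · rintro (v|v) (w|w) h <;> simp [sumUnion] at h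
    · obtain ⟨u, hu, hnu⟩ := h₁.2 v w h
      exact ⟨.inl u, hu, hnu⟩
    · obtain ⟨u, hu, hnu⟩ := h₂.2 v w h
      exact ⟨.inr u, hu, hnu⟩

end CombinatorialProofs
end

section
/- For propositions θ, ψ₁, ψ₂, the 𝒜-labelled graph G(θ∨(ψ₁∧ψ₂)) is true if and only if the 𝒜-labelled graph G((θ∨ψ₁)∧(θ∨ψ₂)) is true. -/
namespace CombinatorialProofs

section Aux

variable {V₁ V₂ : Type} {G₁ : SimpleGraph V₁} {G₂ : SimpleGraph V₂}

@[simp] lemma sumUnion_adj_ll {a b : V₁} :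
    (sumUnion G₁ G₂).Adj (.inl a) (.inl b) ↔ G₁.Adj a b := Iff.rfl
@[simp] lemma sumUnion_adj_rr {a b : V₂} :
    (sumUnion G₁ G₂).Adj (.inr a) (.inr b) ↔ G₂.Adj a b := Iff.rfl
@[simp] lemma sumUnion_adj_lr {a : V₁} {b : V₂} :
    (sumUnion G₁ G₂).Adj (.inl a) (.inr b) ↔ False := Iff.rfl
@[simp] lemma sumUnion_adj_rl {a : V₂} {b : V₁} :
    (sumUnion G₁ G₂).Adj (.inr a) (.inl b) ↔ False := Iff.rfl
@[simp] lemma sumJoin_adj_ll {a b : V₁} :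
    (sumJoin G₁ G₂).Adj (.inl a) (.inl b) ↔ G₁.Adj a b := Iff.rfl
@[simp] lemma sumJoin_adj_rr {a b : V₂} :
    (sumJoin G₁ G₂).Adj (.inr a) (.inr b) ↔ G₂.Adj a b := Iff.rfl
@[simp] lemma sumJoin_adj_lr {a : V₁} {b : V₂} :
    (sumJoin G₁ G₂).Adj (.inl a) (.inr b) ↔ True := Iff.rfl
@[simp] lemma sumJoin_adj_rl {a : V₂} {b : V₁} :
    (sumJoin G₁ G₂).Adj (.inr a) (.inl b) ↔ True := Iff.rfl

lemma sum_decomp (W : Set (V₁ ⊕ V₂)) :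
    W = Sum.inl '' (Sum.inl ⁻¹' W) ∪ Sum.inr '' (Sum.inr ⁻¹' W) := by
  ext (a | b) <;> simp

lemma isClause_nonempty {V : Type} [Nonempty V] {G : SimpleGraph V} {W : Set V}
    (h : IsClause G W) : W.Nonempty := by
  by_contra hne
  rw [Set.not_nonempty_iff_eq_empty] at hne
  obtain ⟨v⟩ := ‹Nonempty V›
  have h1 : IsStable G {v} := by
    intro a ha b hb
    simp only [Set.mem_singleton_iff] at ha hb
    subst ha; subst hb; exact G.irrefl
  have := h.2.2 {v} (Set.subset_univ _) h1 (hne ▸ Set.empty_subset _)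
  rw [hne] at this
  exact absurd this (by simp [Set.eq_empty_iff_forall_notMem])

lemma isClause_sumUnion {W : Set (V₁ ⊕ V₂)} :
    IsClause (sumUnion G₁ G₂) W ↔
      ∃ W₁ W₂, IsClause G₁ W₁ ∧ IsClause G₂ W₂ ∧ W = Sum.inl '' W₁ ∪ Sum.inr '' W₂ := by
  constructor
  · rintro ⟨-, hst, hmax⟩
    refine ⟨Sum.inl ⁻¹' W, Sum.inr ⁻¹' W,
      ⟨Set.subset_univ _, fun a ha b hb => hst _ ha _ hb, ?_⟩,
      ⟨Set.subset_univ _, fun a ha b hb => hst _ ha _ hb, ?_⟩, sum_decomp W⟩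
    · intro W₁' _ hst' hsub
      set W' : Set (V₁ ⊕ V₂) := Sum.inl '' W₁' ∪ Sum.inr '' (Sum.inr ⁻¹' W) with hW'
      have hstW' : IsStable (sumUnion G₁ G₂) W' := by
        rintro x (⟨a, ha, rfl⟩ | ⟨a, ha, rfl⟩) y (⟨b, hb, rfl⟩ | ⟨b, hb, rfl⟩) <;> simp
        · exact hst' a ha b hb
        · exact hst _ ha _ hb
      have hWW' : W ⊆ W' := by
        rw [sum_decomp W]
        exact Set.union_subset_union_left _ (Set.image_mono hsub)
      have hEq := hmax W' (Set.subset_univ _) hstW' hWW'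
      ext a
      constructor
      · intro ha
        have : Sum.inl a ∈ W' := Or.inl (Set.mem_image_of_mem (f := @Sum.inl V₁ V₂) ha)
        rw [hEq] at this; exact this
      · exact fun ha => hsub ha
    · intro W₂' _ hst' hsub
      set W' : Set (V₁ ⊕ V₂) := Sum.inl '' (Sum.inl ⁻¹' W) ∪ Sum.inr '' W₂' with hW'
      have hstW' : IsStable (sumUnion G₁ G₂) W' := by
        rintro x (⟨a, ha, rfl⟩ | ⟨a, ha, rfl⟩) y (⟨b, hb, rfl⟩ | ⟨b, hb, rfl⟩) <;> simp
        · exact hst _ ha _ hb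
        · exact hst' a ha b hb
      have hWW' : W ⊆ W' := by
        rw [sum_decomp W]
        exact Set.union_subset_union_right _ (Set.image_mono hsub)
      have hEq := hmax W' (Set.subset_univ _) hstW' hWW'
      ext a
      constructor
      · intro ha
        have : Sum.inr a ∈ W' := Or.inr (Set.mem_image_of_mem (f := @Sum.inr V₁ V₂) ha)
        rw [hEq] at this; exact this
      · exact fun ha => hsub ha
  · rintro ⟨W₁, W₂, ⟨-, hst₁, hmax₁⟩, ⟨-, hst₂, hmax₂⟩, rfl⟩
    refine ⟨Set.subset_univ _, ?_, ?_⟩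
    · rintro x (⟨a, ha, rfl⟩ | ⟨a, ha, rfl⟩) y (⟨b, hb, rfl⟩ | ⟨b, hb, rfl⟩) <;> simp
      · exact hst₁ a ha b hb
      · exact hst₂ a ha b hb
    · intro W' _ hst' hsub
      have h1 : Sum.inl ⁻¹' W' = W₁ := by
        refine hmax₁ _ (Set.subset_univ _) (fun a ha b hb => hst' _ ha _ hb) ?_
        intro a ha; exact hsub (Or.inl (Set.mem_image_of_mem (f := @Sum.inl V₁ V₂) ha))
      have h2 : Sum.inr ⁻¹' W' = W₂ := by
        refine hmax₂ _ (Set.subset_univ _) (fun a ha b hb => hst' _ ha _ hb) ?_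
        intro a ha; exact hsub (Or.inr (Set.mem_image_of_mem (f := @Sum.inr V₁ V₂) ha))
      rw [sum_decomp W', h1, h2]

lemma eq_inl_image {W : Set (V₁ ⊕ V₂)} (h : ∀ b : V₂, Sum.inr b ∉ W) :
    W = Sum.inl '' (Sum.inl ⁻¹' W) := by
  ext (c | c)
  · simp
  · simp [h c]

lemma eq_inr_image {W : Set (V₁ ⊕ V₂)} (h : ∀ b : V₁, Sum.inl b ∉ W) :
    W = Sum.inr '' (Sum.inr ⁻¹' W) := by
  ext (c | c)
  · simp [h c]
  · simp

lemma isClause_sumJoin [Nonempty V₁] [Nonempty V₂] {W : Set (V₁ ⊕ V₂)} :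
    IsClause (sumJoin G₁ G₂) W ↔
      (∃ W₁, IsClause G₁ W₁ ∧ W = Sum.inl '' W₁) ∨
      (∃ W₂, IsClause G₂ W₂ ∧ W = Sum.inr '' W₂) := by
  constructor
  · intro hW
    obtain ⟨x, hx⟩ := isClause_nonempty hW
    obtain ⟨-, hst, hmax⟩ := hW
    rcases x with a | a
    · left
      have hnoR : ∀ b : V₂, Sum.inr b ∉ W := fun b hb =>
        (hst _ hx _ hb) (by simp)
      have hWeq : W = Sum.inl '' (Sum.inl ⁻¹' W) := eq_inl_image hnoR
      refine ⟨Sum.inl ⁻¹' W, ⟨Set.subset_univ _, fun a ha b hb => hst _ ha _ hb, ?_⟩, hWeq⟩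
      intro W₁' _ hst' hsub
      have hstW' : IsStable (sumJoin G₁ G₂) (Sum.inl '' W₁') := by
        rintro x ⟨c, hc, rfl⟩ y ⟨d, hd, rfl⟩
        exact hst' c hc d hd
      have hEq := hmax _ (Set.subset_univ _) hstW'
        (by rw [hWeq]; exact Set.image_mono hsub)
      ext c
      constructor
      · intro hc
        have : Sum.inl c ∈ Sum.inl '' W₁' := Set.mem_image_of_mem (f := @Sum.inl V₁ V₂) hc
        rw [hEq] at this; exact this
      · exact fun hc => hsub hc
    · right
      have hnoL : ∀ b : V₁, Sum.inl b ∉ W := fun b hb =>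
        (hst _ hx _ hb) (by simp)
      have hWeq : W = Sum.inr '' (Sum.inr ⁻¹' W) := eq_inr_image hnoL
      refine ⟨Sum.inr ⁻¹' W, ⟨Set.subset_univ _, fun a ha b hb => hst _ ha _ hb, ?_⟩, hWeq⟩
      intro W₂' _ hst' hsub
      have hstW' : IsStable (sumJoin G₁ G₂) (Sum.inr '' W₂') := by
        rintro x ⟨c, hc, rfl⟩ y ⟨d, hd, rfl⟩
        exact hst' c hc d hd
      have hEq := hmax _ (Set.subset_univ _) hstW'
        (by rw [hWeq]; exact Set.image_mono hsub)
      ext c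
      constructor
      · intro hc
        have : Sum.inr c ∈ Sum.inr '' W₂' := Set.mem_image_of_mem (f := @Sum.inr V₁ V₂) hc
        rw [hEq] at this; exact this
      · exact fun hc => hsub hc
  · rintro (⟨W₁, hW₁, rfl⟩ | ⟨W₂, hW₂, rfl⟩)
    · obtain ⟨a, ha⟩ := isClause_nonempty hW₁
      obtain ⟨-, hst₁, hmax₁⟩ := hW₁
      refine ⟨Set.subset_univ _, ?_, ?_⟩
      · rintro x ⟨c, hc, rfl⟩ y ⟨d, hd, rfl⟩
        exact hst₁ c hc d hd
      · intro W' _ hst' hsub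
        have hnoR : ∀ b : V₂, Sum.inr b ∉ W' := fun b hb =>
          (hst' _ (hsub (Set.mem_image_of_mem (f := @Sum.inl V₁ V₂) ha)) _ hb) (by simp)
        have hW'eq : W' = Sum.inl '' (Sum.inl ⁻¹' W') := eq_inl_image hnoR
        have h1 : Sum.inl ⁻¹' W' = W₁ := by
          refine hmax₁ _ (Set.subset_univ _) (fun c hc d hd => hst' _ hc _ hd) ?_
          intro c hc; exact hsub (Set.mem_image_of_mem (f := @Sum.inl V₁ V₂) hc)
        rw [hW'eq, h1]
    · obtain ⟨a, ha⟩ := isClause_nonempty hW₂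
      obtain ⟨-, hst₂, hmax₂⟩ := hW₂
      refine ⟨Set.subset_univ _, ?_, ?_⟩
      · rintro x ⟨c, hc, rfl⟩ y ⟨d, hd, rfl⟩
        exact hst₂ c hc d hd
      · intro W' _ hst' hsub
        have hnoL : ∀ b : V₁, Sum.inl b ∉ W' := fun b hb =>
          (hst' _ (hsub (Set.mem_image_of_mem (f := @Sum.inr V₁ V₂) ha)) _ hb) (by simp)
        have hW'eq : W' = Sum.inr '' (Sum.inr ⁻¹' W') := eq_inr_image hnoL
        have h2 : Sum.inr ⁻¹' W' = W₂ := by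
          refine hmax₂ _ (Set.subset_univ _) (fun c hc d hd => hst' _ hc _ hd) ?_
          intro c hc; exact hsub (Set.mem_image_of_mem (f := @Sum.inr V₁ V₂) hc)
        rw [hW'eq, h2]

end Aux

/-- Truth of a set of atoms. -/
def ClauseTrueSet {ν : Type} (S : Set (Atom ν)) : Prop :=
  Atom.tru ∈ S ∨ ∃ a ∈ S, ∃ b ∈ S, DualLiterals a b

lemma clauseTrue_iff_image {ν V : Type} {label : V → Atom ν} {W : Set V} :
    ClauseTrue label W ↔ ClauseTrueSet (label '' W) := by
  unfold ClauseTrue ClauseTrueSet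
  constructor
  · rintro (⟨v, hv, hl⟩ | ⟨v, hv, w, hw, hd⟩)
    · exact Or.inl ⟨v, hv, hl⟩
    · exact Or.inr ⟨_, ⟨v, hv, rfl⟩, _, ⟨w, hw, rfl⟩, hd⟩
  · rintro (⟨v, hv, hl⟩ | ⟨a, ⟨v, hv, rfl⟩, b, ⟨w, hw, rfl⟩, hd⟩)
    · exact Or.inl ⟨v, hv, hl⟩
    · exact Or.inr ⟨v, hv, w, hw, hd⟩

lemma graph_nonempty {ν : Type} (φ : Form ν) : Nonempty φ.graph.V := by
  induction φ with
  | var p => exact ⟨.unit⟩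
  | tru => exact ⟨.unit⟩
  | fls => exact ⟨.unit⟩
  | not φ ih => exact ih
  | and φ ρ ih1 ih2 => exact ⟨.inl ih1.some⟩
  | or φ ρ ih1 ih2 => exact ⟨.inl ih1.some⟩
  | imp φ ρ ih1 ih2 => exact ⟨.inl ih1.some⟩

/-- All pairs of clauses, one from each graph, are jointly true. -/
def PairTrue {ν : Type} (A B : LabGraph ν) : Prop :=
  ∀ Ca, IsClause A.G Ca → ∀ Cb, IsClause B.G Cb →
    ClauseTrueSet (A.label '' Ca ∪ B.label '' Cb)

lemma union_join_isTrue_iff {ν : Type} (Aθ A₁ A₂ : LabGraph ν)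
    [Nonempty Aθ.V] [Nonempty A₁.V] [Nonempty A₂.V] :
    (Aθ.union (A₁.join A₂)).IsTrue ↔ PairTrue Aθ A₁ ∧ PairTrue Aθ A₂ := by
  constructor
  · intro h
    constructor
    · intro Ca hCa Cb hCb
      have hcl : IsClause (Aθ.union (A₁.join A₂)).G
          (Sum.inl '' Ca ∪ Sum.inr '' (Sum.inl '' Cb)) :=
        isClause_sumUnion.mpr ⟨Ca, _, hCa, isClause_sumJoin.mpr (Or.inl ⟨Cb, hCb, rfl⟩), rfl⟩
      have ht := h _ hcl
      rw [clauseTrue_iff_image] at ht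
      have himg : (Aθ.union (A₁.join A₂)).label ''
          (Sum.inl '' Ca ∪ Sum.inr '' (Sum.inl '' Cb))
          = Aθ.label '' Ca ∪ A₁.label '' Cb := by
        ext x; constructor
        · rintro ⟨_, (⟨v, hv, rfl⟩ | ⟨_, ⟨v, hv, rfl⟩, rfl⟩), rfl⟩
          · exact Or.inl ⟨v, hv, rfl⟩
          · exact Or.inr ⟨v, hv, rfl⟩
        · rintro (⟨v, hv, rfl⟩ | ⟨v, hv, rfl⟩)
          · exact ⟨_, Or.inl ⟨v, hv, rfl⟩, rfl⟩
          · exact ⟨_, Or.inr ⟨_, ⟨v, hv, rfl⟩, rfl⟩, rfl⟩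
      rwa [himg] at ht
    · intro Ca hCa Cb hCb
      have hcl : IsClause (Aθ.union (A₁.join A₂)).G
          (Sum.inl '' Ca ∪ Sum.inr '' (Sum.inr '' Cb)) :=
        isClause_sumUnion.mpr ⟨Ca, _, hCa, isClause_sumJoin.mpr (Or.inr ⟨Cb, hCb, rfl⟩), rfl⟩
      have ht := h _ hcl
      rw [clauseTrue_iff_image] at ht
      have himg : (Aθ.union (A₁.join A₂)).label ''
          (Sum.inl '' Ca ∪ Sum.inr '' (Sum.inr '' Cb))
          = Aθ.label '' Ca ∪ A₂.label '' Cb := by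
        ext x; constructor
        · rintro ⟨_, (⟨v, hv, rfl⟩ | ⟨_, ⟨v, hv, rfl⟩, rfl⟩), rfl⟩
          · exact Or.inl ⟨v, hv, rfl⟩
          · exact Or.inr ⟨v, hv, rfl⟩
        · rintro (⟨v, hv, rfl⟩ | ⟨v, hv, rfl⟩)
          · exact ⟨_, Or.inl ⟨v, hv, rfl⟩, rfl⟩
          · exact ⟨_, Or.inr ⟨_, ⟨v, hv, rfl⟩, rfl⟩, rfl⟩
      rwa [himg] at ht
  · rintro ⟨k₁, k₂⟩ W hW
    rcases isClause_sumUnion.mp hW with ⟨Ca, D, hCa, hD, rfl⟩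
    refine clauseTrue_iff_image.mpr ?_
    rcases isClause_sumJoin.mp hD with ⟨Cb, hCb, rfl⟩ | ⟨Cb, hCb, rfl⟩
    · have himg : (Aθ.union (A₁.join A₂)).label ''
          (Sum.inl '' Ca ∪ Sum.inr '' (Sum.inl '' Cb))
          = Aθ.label '' Ca ∪ A₁.label '' Cb := by
        ext x; constructor
        · rintro ⟨_, (⟨v, hv, rfl⟩ | ⟨_, ⟨v, hv, rfl⟩, rfl⟩), rfl⟩
          · exact Or.inl ⟨v, hv, rfl⟩
          · exact Or.inr ⟨v, hv, rfl⟩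
        · rintro (⟨v, hv, rfl⟩ | ⟨v, hv, rfl⟩)
          · exact ⟨_, Or.inl ⟨v, hv, rfl⟩, rfl⟩
          · exact ⟨_, Or.inr ⟨_, ⟨v, hv, rfl⟩, rfl⟩, rfl⟩
      exact (congrArg ClauseTrueSet himg).mpr (k₁ _ hCa _ hCb)
    · have himg : (Aθ.union (A₁.join A₂)).label ''
          (Sum.inl '' Ca ∪ Sum.inr '' (Sum.inr '' Cb))
          = Aθ.label '' Ca ∪ A₂.label '' Cb := by
        ext x; constructor
        · rintro ⟨_, (⟨v, hv, rfl⟩ | ⟨_, ⟨v, hv, rfl⟩, rfl⟩), rfl⟩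
          · exact Or.inl ⟨v, hv, rfl⟩
          · exact Or.inr ⟨v, hv, rfl⟩
        · rintro (⟨v, hv, rfl⟩ | ⟨v, hv, rfl⟩)
          · exact ⟨_, Or.inl ⟨v, hv, rfl⟩, rfl⟩
          · exact ⟨_, Or.inr ⟨_, ⟨v, hv, rfl⟩, rfl⟩, rfl⟩
      exact (congrArg ClauseTrueSet himg).mpr (k₂ _ hCa _ hCb)

lemma join_union_isTrue_iff {ν : Type} (Aθ A₁ A₂ : LabGraph ν)
    [Nonempty Aθ.V] [Nonempty A₁.V] [Nonempty A₂.V] :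
    ((Aθ.union A₁).join (Aθ.union A₂)).IsTrue ↔ PairTrue Aθ A₁ ∧ PairTrue Aθ A₂ := by
  haveI : Nonempty (Aθ.union A₁).V := ⟨Sum.inl (Classical.arbitrary _)⟩
  haveI : Nonempty (Aθ.union A₂).V := ⟨Sum.inl (Classical.arbitrary _)⟩
  constructor
  · intro h
    constructor
    · intro Ca hCa Cb hCb
      have hcl : IsClause ((Aθ.union A₁).join (Aθ.union A₂)).G
          (Sum.inl '' (Sum.inl '' Ca ∪ Sum.inr '' Cb)) :=
        isClause_sumJoin.mpr (Or.inl ⟨_, isClause_sumUnion.mpr ⟨Ca, Cb, hCa, hCb, rfl⟩, rfl⟩)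
      have ht := h _ hcl
      rw [clauseTrue_iff_image] at ht
      have himg : ((Aθ.union A₁).join (Aθ.union A₂)).label ''
          (Sum.inl '' (Sum.inl '' Ca ∪ Sum.inr '' Cb))
          = Aθ.label '' Ca ∪ A₁.label '' Cb := by
        ext x; constructor
        · rintro ⟨_, ⟨_, (⟨v, hv, rfl⟩ | ⟨v, hv, rfl⟩), rfl⟩, rfl⟩
          · exact Or.inl ⟨v, hv, rfl⟩
          · exact Or.inr ⟨v, hv, rfl⟩
        · rintro (⟨v, hv, rfl⟩ | ⟨v, hv, rfl⟩)
          · exact ⟨_, ⟨_, Or.inl ⟨v, hv, rfl⟩, rfl⟩, rfl⟩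
          · exact ⟨_, ⟨_, Or.inr ⟨v, hv, rfl⟩, rfl⟩, rfl⟩
      rwa [himg] at ht
    · intro Ca hCa Cb hCb
      have hcl : IsClause ((Aθ.union A₁).join (Aθ.union A₂)).G
          (Sum.inr '' (Sum.inl '' Ca ∪ Sum.inr '' Cb)) :=
        isClause_sumJoin.mpr (Or.inr ⟨_, isClause_sumUnion.mpr ⟨Ca, Cb, hCa, hCb, rfl⟩, rfl⟩)
      have ht := h _ hcl
      rw [clauseTrue_iff_image] at ht
      have himg : ((Aθ.union A₁).join (Aθ.union A₂)).label ''
          (Sum.inr '' (Sum.inl '' Ca ∪ Sum.inr '' Cb))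
          = Aθ.label '' Ca ∪ A₂.label '' Cb := by
        ext x; constructor
        · rintro ⟨_, ⟨_, (⟨v, hv, rfl⟩ | ⟨v, hv, rfl⟩), rfl⟩, rfl⟩
          · exact Or.inl ⟨v, hv, rfl⟩
          · exact Or.inr ⟨v, hv, rfl⟩
        · rintro (⟨v, hv, rfl⟩ | ⟨v, hv, rfl⟩)
          · exact ⟨_, ⟨_, Or.inl ⟨v, hv, rfl⟩, rfl⟩, rfl⟩
          · exact ⟨_, ⟨_, Or.inr ⟨v, hv, rfl⟩, rfl⟩, rfl⟩
      rwa [himg] at ht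
  · rintro ⟨k₁, k₂⟩ W hW
    refine clauseTrue_iff_image.mpr ?_
    rcases isClause_sumJoin.mp hW with ⟨D, hD, rfl⟩ | ⟨D, hD, rfl⟩ <;>
      rcases isClause_sumUnion.mp hD with ⟨Ca, Cb, hCa, hCb, rfl⟩
    · have himg : ((Aθ.union A₁).join (Aθ.union A₂)).label ''
          (Sum.inl '' (Sum.inl '' Ca ∪ Sum.inr '' Cb))
          = Aθ.label '' Ca ∪ A₁.label '' Cb := by
        ext x; constructor
        · rintro ⟨_, ⟨_, (⟨v, hv, rfl⟩ | ⟨v, hv, rfl⟩), rfl⟩, rfl⟩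
          · exact Or.inl ⟨v, hv, rfl⟩
          · exact Or.inr ⟨v, hv, rfl⟩
        · rintro (⟨v, hv, rfl⟩ | ⟨v, hv, rfl⟩)
          · exact ⟨_, ⟨_, Or.inl ⟨v, hv, rfl⟩, rfl⟩, rfl⟩
          · exact ⟨_, ⟨_, Or.inr ⟨v, hv, rfl⟩, rfl⟩, rfl⟩
      exact (congrArg ClauseTrueSet himg).mpr (k₁ _ hCa _ hCb)
    · have himg : ((Aθ.union A₁).join (Aθ.union A₂)).label ''
          (Sum.inr '' (Sum.inl '' Ca ∪ Sum.inr '' Cb))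
          = Aθ.label '' Ca ∪ A₂.label '' Cb := by
        ext x; constructor
        · rintro ⟨_, ⟨_, (⟨v, hv, rfl⟩ | ⟨v, hv, rfl⟩), rfl⟩, rfl⟩
          · exact Or.inl ⟨v, hv, rfl⟩
          · exact Or.inr ⟨v, hv, rfl⟩
        · rintro (⟨v, hv, rfl⟩ | ⟨v, hv, rfl⟩)
          · exact ⟨_, ⟨_, Or.inl ⟨v, hv, rfl⟩, rfl⟩, rfl⟩
          · exact ⟨_, ⟨_, Or.inr ⟨v, hv, rfl⟩, rfl⟩, rfl⟩
      exact (congrArg ClauseTrueSet himg).mpr (k₂ _ hCa _ hCb)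

/-- For propositions `θ, ψ₁, ψ₂`, the labelled graph `G(θ ∨ (ψ₁ ∧ ψ₂))` is true iff the
labelled graph `G((θ ∨ ψ₁) ∧ (θ ∨ ψ₂))` is true. -/
theorem distributivity_preserves_truth (ν : Type) (θ ψ₁ ψ₂ : Form ν) :
    (Form.graph (Form.or θ (Form.and ψ₁ ψ₂))).IsTrue ↔
    (Form.graph (Form.and (Form.or θ ψ₁) (Form.or θ ψ₂))).IsTrue := by
  haveI : Nonempty θ.graph.V := graph_nonempty θ
  haveI : Nonempty ψ₁.graph.V := graph_nonempty ψ₁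
  haveI : Nonempty ψ₂.graph.V := graph_nonempty ψ₂
  exact (union_join_isTrue_iff θ.graph ψ₁.graph ψ₂.graph).trans
    (join_union_isTrue_iff θ.graph ψ₁.graph ψ₂.graph).symm

end CombinatorialProofs
end
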